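/- With L the O-ideal generated by g₁ = −1 − ξ + λ − 2λξ and g₃ = −2 + ξ + 2λ + 2λξ in O = ℤ[ξ, λ], the dual module L* (with respect to the trace-type pairing x.y + (x.y)′, x.y = Re(x̄y)) equals (i√5/135)·L. -/

import Mathlib

noncomputable def xi : ℂ := (1 + Complex.I * (Real.sqrt 3 : ℂ)) / 2
noncomputable def lam : ℂ := 4 + (Real.sqrt 15 : ℂ)
/-- The ring O = ℤ[ξ, λ] as a subalgebra of ℂ. -/
noncomputable def OA : Subalgebra ℤ ℂ := Algebra.adjoin ℤ ({xi, lam} : Set ℂ)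
noncomputable def g1 : ℂ := -1 - xi + lam - 2 * (lam * xi)
noncomputable def g3 : ℂ := -2 + xi + 2 * lam + 2 * (lam * xi)
/-- The O-ideal L = O·g₁ + O·g₃. -/
noncomputable def Lideal : Submodule OA ℂ :=
  Submodule.span OA ({g1, g3} : Set ℂ)
/-- K = ℚ(√−3, √−5). -/
noncomputable def Kfield : IntermediateField ℚ ℂ :=
  IntermediateField.adjoin ℚ
    ({Complex.I * (Real.sqrt 3 : ℂ), Complex.I * (Real.sqrt 5 : ℂ)} : Set ℂ)
/-- ℚ(√15) ⊂ ℝ. -/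
noncomputable def Fq15 : IntermediateField ℚ ℝ :=
  IntermediateField.adjoin ℚ ({Real.sqrt 15} : Set ℝ)

/-- The dual of a subset M ⊆ K with respect to the pairing x.y + (x.y)′,
where x.y = (x̄y + xȳ)/2 = Re(x̄y) ∈ ℚ(√15) and (·)′ = τ is √15 ↦ −√15. -/
noncomputable def dualSet (τ : Fq15 ≃ₐ[ℚ] Fq15) (M : Set ℂ) : Set ℂ :=
  {y : ℂ | y ∈ Kfield ∧ ∀ x ∈ M, ∃ z : Fq15,
    (z : ℝ) = ((starRingEnd ℂ) x * y).re ∧ ∃ n : ℤ, (z : ℝ) + (τ z : ℝ) = (n : ℝ)}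

noncomputable def rep (a b c d : ℚ) : ℂ :=
  (a:ℂ) + (b:ℂ) * (Complex.I * (Real.sqrt 3:ℂ)) + (c:ℂ) * (Complex.I * (Real.sqrt 5:ℂ))
    + (d:ℂ) * (Real.sqrt 15:ℂ)
lemma s3_sq : (Real.sqrt 3 : ℂ)^2 = 3 := by
  rw [← Complex.ofReal_pow, Real.sq_sqrt (by norm_num : (3:ℝ) ≥ 0)]; norm_num
lemma s35 : (Real.sqrt 3:ℂ) * (Real.sqrt 5:ℂ) = (Real.sqrt 15:ℂ) := by
  rw [← Complex.ofReal_mul, ← Real.sqrt_mul (by norm_num : (3:ℝ) ≥ 0)]; norm_num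

-- Fq15 layer
noncomputable def s15F : Fq15 :=
  ⟨Real.sqrt 15, IntermediateField.subset_adjoin _ _ rfl⟩
noncomputable def zF (p q : ℚ) : Fq15 := (p : Fq15) + (q : Fq15) * s15F
lemma zF_coe (p q : ℚ) : ((zF p q : Fq15) : ℝ) = (p:ℝ) + (q:ℝ) * Real.sqrt 15 := by
  simp [zF, s15F]
lemma tau_s15 (τ : Fq15 ≃ₐ[ℚ] Fq15)
    (hτ : ∀ z : Fq15, (z : ℝ) = Real.sqrt 15 → (τ z : ℝ) = -Real.sqrt 15) :
    τ s15F = -s15F := by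
  have h := hτ s15F rfl
  exact Subtype.coe_injective (by simpa [s15F] using h)
lemma zF_tau (τ : Fq15 ≃ₐ[ℚ] Fq15)
    (hτ : ∀ z : Fq15, (z : ℝ) = Real.sqrt 15 → (τ z : ℝ) = -Real.sqrt 15)
    (p q : ℚ) : τ (zF p q) = zF p (-q) := by
  simp [zF, map_add, map_mul, map_ratCast, tau_s15 τ hτ]

-- Kfield layer
lemma I3_alg : IsAlgebraic ℚ (Complex.I * (Real.sqrt 3:ℂ)) := by
  refine ⟨Polynomial.X^2 + Polynomial.C 3, ?_, ?_⟩
  · exact Polynomial.X_pow_add_C_ne_zero (by norm_num) 3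
  · simp only [map_add, map_pow, Polynomial.aeval_X, Polynomial.aeval_C, map_ofNat]
    linear_combination ((Real.sqrt 3:ℂ))^2 * Complex.I_sq - s3_sq
lemma I5_alg : IsAlgebraic ℚ (Complex.I * (Real.sqrt 5:ℂ)) := by
  refine ⟨Polynomial.X^2 + Polynomial.C 5, ?_, ?_⟩
  · exact Polynomial.X_pow_add_C_ne_zero (by norm_num) 5
  · simp only [map_add, map_pow, Polynomial.aeval_X, Polynomial.aeval_C, map_ofNat]
    have s5_sq : (Real.sqrt 5 : ℂ)^2 = 5 := by
      rw [← Complex.ofReal_pow, Real.sq_sqrt (by norm_num : (5:ℝ) ≥ 0)]; norm_num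
    linear_combination ((Real.sqrt 5:ℂ))^2 * Complex.I_sq - s5_sq

lemma rep_mul' (a b c d a' b' c' d' : ℚ) :
    rep a b c d * rep a' b' c' d'
      = rep (a*a'-3*b*b'-5*c*c'+15*d*d') (a*b'+a'*b+5*(c*d'+c'*d))
          (a*c'+a'*c+3*(b*d'+b'*d)) (a*d'+a'*d-(b*c'+b'*c)) := by
  unfold rep; push_cast
  have s5_sq : (Real.sqrt 5 : ℂ)^2 = 5 := by
    rw [← Complex.ofReal_pow, Real.sq_sqrt (by norm_num : (5:ℝ) ≥ 0)]; norm_num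
  have s15_sq : (Real.sqrt 15 : ℂ)^2 = 15 := by
    rw [← Complex.ofReal_pow, Real.sq_sqrt (by norm_num : (15:ℝ) ≥ 0)]; norm_num
  linear_combination
    ((b:ℂ)*b'*(Real.sqrt 3:ℂ)^2 + (c:ℂ)*c'*(Real.sqrt 5:ℂ)^2
      + ((b:ℂ)*c'+(b':ℂ)*c)*(Real.sqrt 3:ℂ)*(Real.sqrt 5:ℂ)) * Complex.I_sq
    + (-(b:ℂ)*b' + ((b:ℂ)*d'+(b':ℂ)*d)*Complex.I*(Real.sqrt 5:ℂ)) * s3_sq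
    + (-(c:ℂ)*c' + ((c:ℂ)*d'+(c':ℂ)*d)*Complex.I*(Real.sqrt 3:ℂ)) * s5_sq
    + (d:ℂ)*d' * s15_sq
    + (-((b:ℂ)*c'+(b':ℂ)*c) - ((b:ℂ)*d'+(b':ℂ)*d)*Complex.I*(Real.sqrt 3:ℂ)
        - ((c:ℂ)*d'+(c':ℂ)*d)*Complex.I*(Real.sqrt 5:ℂ)) * s35

lemma rep_add' (a b c d a' b' c' d' : ℚ) :
    rep a b c d + rep a' b' c' d' = rep (a+a') (b+b') (c+c') (d+d') := by
  unfold rep; push_cast; ring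

lemma rep_of_K {y : ℂ} (hy : y ∈ Kfield) : ∃ a b c d : ℚ, y = rep a b c d := by
  have halg : ∀ x ∈ ({Complex.I * (Real.sqrt 3:ℂ), Complex.I * (Real.sqrt 5:ℂ)} : Set ℂ),
      IsAlgebraic ℚ x := by
    rintro x (rfl | rfl)
    · exact I3_alg
    · exact I5_alg
  have h2 : y ∈ Algebra.adjoin ℚ
      ({Complex.I * (Real.sqrt 3:ℂ), Complex.I * (Real.sqrt 5:ℂ)} : Set ℂ) := by
    rw [← IntermediateField.adjoin_toSubalgebra_of_isAlgebraic halg]; exact hy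
  clear hy
  induction h2 using Algebra.adjoin_induction with
  | mem x hx =>
    rcases hx with rfl | rfl
    · exact ⟨0, 1, 0, 0, by unfold rep; push_cast; ring⟩
    · exact ⟨0, 0, 1, 0, by unfold rep; push_cast; ring⟩
  | algebraMap q => exact ⟨q, 0, 0, 0, by rw [eq_ratCast]; unfold rep; push_cast; ring⟩
  | add x y _ _ ihx ihy =>
    obtain ⟨a,b,c,d,rfl⟩ := ihx; obtain ⟨a',b',c',d',rfl⟩ := ihy
    exact ⟨_,_,_,_, rep_add' _ _ _ _ _ _ _ _⟩
  | mul x y _ _ ihx ihy =>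
    obtain ⟨a,b,c,d,rfl⟩ := ihx; obtain ⟨a',b',c',d',rfl⟩ := ihy
    exact ⟨_,_,_,_, rep_mul' _ _ _ _ _ _ _ _⟩

lemma rep_mem_K (a b c d : ℚ) : rep a b c d ∈ Kfield := by
  have hu : Complex.I * (Real.sqrt 3:ℂ) ∈ Kfield :=
    IntermediateField.subset_adjoin _ _ (Set.mem_insert _ _)
  have hv : Complex.I * (Real.sqrt 5:ℂ) ∈ Kfield :=
    IntermediateField.subset_adjoin _ _ (Set.mem_insert_of_mem _ rfl)
  have h15 : (Real.sqrt 15:ℂ) = -((Complex.I*(Real.sqrt 3:ℂ)) * (Complex.I*(Real.sqrt 5:ℂ))) := by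
    linear_combination (-1 : ℂ) * s35 + (Real.sqrt 3:ℂ)*(Real.sqrt 5:ℂ) * Complex.I_sq
  unfold rep; rw [h15]
  have hq : ∀ q : ℚ, (q:ℂ) ∈ Kfield := fun q => by
    simpa using IntermediateField.algebraMap_mem Kfield q
  exact add_mem (add_mem (add_mem (hq a) (mul_mem (hq b) hu)) (mul_mem (hq c) hv))
    (mul_mem (hq d) (neg_mem (mul_mem hu hv)))

lemma rep_intCast (n : ℤ) : ((n:ℤ):ℂ) = rep (n:ℚ) 0 0 0 := by
  unfold rep; push_cast; ring
lemma rep_congr {a b c d a' b' c' d' : ℚ} (h1 : a = a') (h2 : b = b')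
    (h3 : c = c') (h4 : d = d') : rep a b c d = rep a' b' c' d' := by rw [h1,h2,h3,h4]
lemma rep_zsmul (n : ℤ) (a b c d : ℚ) :
    n • rep a b c d = rep (n*a) (n*b) (n*c) (n*d) := by
  unfold rep; push_cast [zsmul_eq_mul]; ring
lemma rep_neg (a b c d : ℚ) : -rep a b c d = rep (-a) (-b) (-c) (-d) := by
  unfold rep; push_cast; ring
lemma rep_sub (a b c d a' b' c' d' : ℚ) :
    rep a b c d - rep a' b' c' d' = rep (a-a') (b-b') (c-c') (d-d') := by
  unfold rep; push_cast; ring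

noncomputable def e1' : ℂ := rep (3/2) (3/2) 3 0
noncomputable def e2' : ℂ := rep 0 3 0 0
noncomputable def e3' : ℂ := rep 0 0 (9/2) (3/2)
noncomputable def e4' : ℂ := rep 0 0 0 3

lemma xi_rep : xi = rep (1/2) (1/2) 0 0 := by unfold xi rep; push_cast; ring
lemma lam_rep : lam = rep 4 0 0 1 := by unfold lam rep; push_cast; ring
lemma g1_rep : g1 = rep (-3/2) (-9/2) (-3) 0 := by
  unfold g1 xi lam rep; push_cast
  linear_combination Complex.I * (Real.sqrt 3:ℂ) * s35 - Complex.I * (Real.sqrt 5:ℂ) * s3_sq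
lemma g3_rep : g3 = rep (21/2) (9/2) 3 3 := by
  unfold g3 xi lam rep; push_cast
  linear_combination (-(Complex.I * (Real.sqrt 3:ℂ))) * s35 + Complex.I * (Real.sqrt 5:ℂ) * s3_sq

noncomputable def Espan : Submodule ℤ ℂ := Submodule.span ℤ {e1', e2', e3', e4'}

lemma e1'_E : e1' ∈ Espan := Submodule.subset_span (Set.mem_insert _ _)
lemma e2'_E : e2' ∈ Espan := Submodule.subset_span (Set.mem_insert_of_mem _ (Set.mem_insert _ _))
lemma e3'_E : e3' ∈ Espan :=
  Submodule.subset_span (Set.mem_insert_of_mem _ (Set.mem_insert_of_mem _ (Set.mem_insert _ _)))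
lemma e4'_E : e4' ∈ Espan :=
  Submodule.subset_span (Set.mem_insert_of_mem _ (Set.mem_insert_of_mem _
    (Set.mem_insert_of_mem _ rfl)))

lemma combo_mem (k1 k2 k3 k4 : ℤ) :
    (k1:ℂ) * e1' + (k2:ℂ) * e2' + (k3:ℂ) * e3' + (k4:ℂ) * e4' ∈ Espan := by
  have h : ∀ (k : ℤ) (e : ℂ), e ∈ Espan → (k:ℂ) * e ∈ Espan := by
    intro k e he
    simpa [zsmul_eq_mul] using Submodule.smul_mem Espan k he
  exact add_mem (add_mem (add_mem (h _ _ e1'_E) (h _ _ e2'_E)) (h _ _ e3'_E)) (h _ _ e4'_E)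

-- closure of Espan under multiplication by xi, lam
lemma xi_mul_E : ∀ x ∈ Espan, xi * x ∈ Espan := by
  intro x hx
  induction hx using Submodule.span_induction with
  | mem y hy =>
    rcases hy with rfl | rfl | rfl | rfl
    · have : xi * e1' = ((-1:ℤ):ℂ)*e1' + ((1:ℤ):ℂ)*e2' + ((1:ℤ):ℂ)*e3' + ((-1:ℤ):ℂ)*e4' := by
        simp only [xi_rep, e1', e2', e3', e4', rep_intCast, rep_mul', rep_add']
        exact rep_congr (by norm_num) (by norm_num) (by norm_num) (by norm_num)
      rw [this]; exact combo_mem _ _ _ _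
    · have : xi * e2' = ((-3:ℤ):ℂ)*e1' + ((2:ℤ):ℂ)*e2' + ((2:ℤ):ℂ)*e3' + ((-1:ℤ):ℂ)*e4' := by
        simp only [xi_rep, e1', e2', e3', e4', rep_intCast, rep_mul', rep_add']
        exact rep_congr (by norm_num) (by norm_num) (by norm_num) (by norm_num)
      rw [this]; exact combo_mem _ _ _ _
    · have : xi * e3' = ((0:ℤ):ℂ)*e1' + ((0:ℤ):ℂ)*e2' + ((1:ℤ):ℂ)*e3' + ((-1:ℤ):ℂ)*e4' := by
        simp only [xi_rep, e1', e2', e3', e4', rep_intCast, rep_mul', rep_add']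
        exact rep_congr (by norm_num) (by norm_num) (by norm_num) (by norm_num)
      rw [this]; exact combo_mem _ _ _ _
    · have : xi * e4' = ((0:ℤ):ℂ)*e1' + ((0:ℤ):ℂ)*e2' + ((1:ℤ):ℂ)*e3' + ((0:ℤ):ℂ)*e4' := by
        simp only [xi_rep, e1', e2', e3', e4', rep_intCast, rep_mul', rep_add']
        exact rep_congr (by norm_num) (by norm_num) (by norm_num) (by norm_num)
      rw [this]; exact combo_mem _ _ _ _
  | zero => simpa using Espan.zero_mem
  | add y z _ _ ihy ihz => rw [mul_add]; exact add_mem ihy ihz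
  | smul n y _ ihy =>
    rw [mul_smul_comm]
    exact Submodule.smul_mem _ _ ihy

lemma lam_mul_E : ∀ x ∈ Espan, lam * x ∈ Espan := by
  intro x hx
  induction hx using Submodule.span_induction with
  | mem y hy =>
    rcases hy with rfl | rfl | rfl | rfl
    · have : lam * e1' = ((4:ℤ):ℂ)*e1' + ((5:ℤ):ℂ)*e2' + ((1:ℤ):ℂ)*e3' + ((0:ℤ):ℂ)*e4' := by
        simp only [lam_rep, e1', e2', e3', e4', rep_intCast, rep_mul', rep_add']
        exact rep_congr (by norm_num) (by norm_num) (by norm_num) (by norm_num)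
      rw [this]; exact combo_mem _ _ _ _
    · have : lam * e2' = ((0:ℤ):ℂ)*e1' + ((4:ℤ):ℂ)*e2' + ((2:ℤ):ℂ)*e3' + ((-1:ℤ):ℂ)*e4' := by
        simp only [lam_rep, e1', e2', e3', e4', rep_intCast, rep_mul', rep_add']
        exact rep_congr (by norm_num) (by norm_num) (by norm_num) (by norm_num)
      rw [this]; exact combo_mem _ _ _ _
    · have : lam * e3' = ((15:ℤ):ℂ)*e1' + ((0:ℤ):ℂ)*e2' + ((-6:ℤ):ℂ)*e3' + ((5:ℤ):ℂ)*e4' := by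
        simp only [lam_rep, e1', e2', e3', e4', rep_intCast, rep_mul', rep_add']
        exact rep_congr (by norm_num) (by norm_num) (by norm_num) (by norm_num)
      rw [this]; exact combo_mem _ _ _ _
    · have : lam * e4' = ((30:ℤ):ℂ)*e1' + ((-15:ℤ):ℂ)*e2' + ((-20:ℤ):ℂ)*e3' + ((14:ℤ):ℂ)*e4' := by
        simp only [lam_rep, e1', e2', e3', e4', rep_intCast, rep_mul', rep_add']
        exact rep_congr (by norm_num) (by norm_num) (by norm_num) (by norm_num)
      rw [this]; exact combo_mem _ _ _ _
  | zero => simp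
  | add y z _ _ ihy ihz => rw [mul_add]; exact add_mem ihy ihz
  | smul n y _ ihy => rw [mul_smul_comm]; exact Submodule.smul_mem _ _ ihy

lemma OA_mul_E : ∀ a ∈ OA, ∀ x ∈ Espan, a * x ∈ Espan := by
  intro a ha
  induction ha using Algebra.adjoin_induction with
  | mem y hy =>
    rcases hy with rfl | rfl
    · exact xi_mul_E
    · exact lam_mul_E
  | algebraMap n =>
    intro x hx
    have : (algebraMap ℤ ℂ n) * x = n • x := by
      rw [eq_intCast, zsmul_eq_mul]
    rw [this]; exact Submodule.smul_mem _ _ hx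
  | add y z _ _ ihy ihz =>
    intro x hx
    rw [add_mul]; exact add_mem (ihy x hx) (ihz x hx)
  | mul y z _ _ ihy ihz =>
    intro x hx
    rw [mul_assoc]; exact ihy _ (ihz x hx)

lemma L_subset_E : (Lideal : Set ℂ) ⊆ (Espan : Set ℂ) := by
  intro x hx
  induction hx using Submodule.span_induction with
  | mem y hy =>
    rcases hy with rfl | rfl
    · have : g1 = ((-1:ℤ):ℂ)*e1' + ((-1:ℤ):ℂ)*e2' + ((0:ℤ):ℂ)*e3' + ((0:ℤ):ℂ)*e4' := by
        simp only [g1_rep, e1', e2', e3', e4', rep_intCast, rep_mul', rep_add']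
        exact rep_congr (by norm_num) (by norm_num) (by norm_num) (by norm_num)
      rw [this]; exact combo_mem _ _ _ _
    · have : g3 = ((7:ℤ):ℂ)*e1' + ((-2:ℤ):ℂ)*e2' + ((-4:ℤ):ℂ)*e3' + ((3:ℤ):ℂ)*e4' := by
        simp only [g3_rep, e1', e2', e3', e4', rep_intCast, rep_mul', rep_add']
        exact rep_congr (by norm_num) (by norm_num) (by norm_num) (by norm_num)
      rw [this]; exact combo_mem _ _ _ _
  | zero => exact Espan.zero_mem
  | add y z _ _ ihy ihz => exact add_mem ihy ihz
  | smul a y _ ihy =>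
    have : a • y = (a:ℂ) * y := rfl
    rw [this]; exact OA_mul_E (a:ℂ) a.2 y ihy

lemma xi_OA : xi ∈ OA := Algebra.subset_adjoin (Set.mem_insert _ _)
lemma lam_OA : lam ∈ OA := Algebra.subset_adjoin (Set.mem_insert_of_mem _ rfl)
lemma g1_L : g1 ∈ Lideal := Submodule.subset_span (Set.mem_insert _ _)
lemma g3_L : g3 ∈ Lideal := Submodule.subset_span (Set.mem_insert_of_mem _ rfl)

lemma scal_mem (p q r : ℤ) : ((p:ℤ):ℂ) + ((q:ℤ):ℂ) * xi + ((r:ℤ):ℂ) * (lam * xi) ∈ OA :=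
  add_mem (add_mem (intCast_mem _ _) (mul_mem (intCast_mem _ _) xi_OA))
    (mul_mem (intCast_mem _ _) (mul_mem lam_OA xi_OA))

lemma scal_smul (p q r : ℤ) (x : ℂ) :
    ((⟨_, scal_mem p q r⟩ : OA) : OA) • x
      = (((p:ℤ):ℂ) + ((q:ℤ):ℂ) * xi + ((r:ℤ):ℂ) * (lam * xi)) * x := rfl

lemma e_mem_L : e1' ∈ Lideal ∧ e2' ∈ Lideal ∧ e3' ∈ Lideal ∧ e4' ∈ Lideal := by
  have key : ∀ (p q r p' q' r' : ℤ),
      (((p:ℤ):ℂ) + ((q:ℤ):ℂ) * xi + ((r:ℤ):ℂ) * (lam * xi)) * g1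
        + (((p':ℤ):ℂ) + ((q':ℤ):ℂ) * xi + ((r':ℤ):ℂ) * (lam * xi)) * g3 ∈ Lideal := by
    intro p q r p' q' r'
    have h1 := Submodule.smul_mem Lideal (⟨_, scal_mem p q r⟩ : OA) g1_L
    have h2 := Submodule.smul_mem Lideal (⟨_, scal_mem p' q' r'⟩ : OA) g3_L
    rw [scal_smul] at h1; rw [scal_smul] at h2
    exact add_mem h1 h2
  refine ⟨?_, ?_, ?_, ?_⟩
  · have h := key (-10) 6 (-1) 0 10 (-2)
    have e : (((-10:ℤ):ℂ) + ((6:ℤ):ℂ) * xi + (((-1):ℤ):ℂ) * (lam * xi)) * g1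
        + (((0:ℤ):ℂ) + ((10:ℤ):ℂ) * xi + (((-2):ℤ):ℂ) * (lam * xi)) * g3 = e1' := by
      simp only [xi_rep, lam_rep, g1_rep, g3_rep, e1', rep_intCast, rep_mul', rep_add']
      exact rep_congr (by norm_num) (by norm_num) (by norm_num) (by norm_num)
    rwa [e] at h
  · have h := key 9 (-6) 1 0 (-10) 2
    have e : (((9:ℤ):ℂ) + (((-6):ℤ):ℂ) * xi + ((1:ℤ):ℂ) * (lam * xi)) * g1
        + (((0:ℤ):ℂ) + (((-10):ℤ):ℂ) * xi + ((2:ℤ):ℂ) * (lam * xi)) * g3 = e2' := by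
      simp only [xi_rep, lam_rep, g1_rep, g3_rep, e2', rep_intCast, rep_mul', rep_add']
      exact rep_congr (by norm_num) (by norm_num) (by norm_num) (by norm_num)
    rwa [e] at h
  · have h := key (-7) 7 (-1) 0 12 (-2)
    have e : (((-7:ℤ):ℂ) + ((7:ℤ):ℂ) * xi + (((-1):ℤ):ℂ) * (lam * xi)) * g1
        + (((0:ℤ):ℂ) + ((12:ℤ):ℂ) * xi + (((-2):ℤ):ℂ) * (lam * xi)) * g3 = e3' := by
      simp only [xi_rep, lam_rep, g1_rep, g3_rep, e3', rep_intCast, rep_mul', rep_add']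
      exact rep_congr (by norm_num) (by norm_num) (by norm_num) (by norm_num)
    rwa [e] at h
  · have h := key 9 (-5) 1 0 (-2) 1
    have e : (((9:ℤ):ℂ) + (((-5):ℤ):ℂ) * xi + ((1:ℤ):ℂ) * (lam * xi)) * g1
        + (((0:ℤ):ℂ) + (((-2):ℤ):ℂ) * xi + ((1:ℤ):ℂ) * (lam * xi)) * g3 = e4' := by
      simp only [xi_rep, lam_rep, g1_rep, g3_rep, e4', rep_intCast, rep_mul', rep_add']
      exact rep_congr (by norm_num) (by norm_num) (by norm_num) (by norm_num)
    rwa [e] at h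

lemma E_subset_L : (Espan : Set ℂ) ⊆ (Lideal : Set ℂ) := by
  intro x hx
  induction hx using Submodule.span_induction with
  | mem y hy =>
    rcases hy with rfl | rfl | rfl | rfl
    · exact e_mem_L.1
    · exact e_mem_L.2.1
    · exact e_mem_L.2.2.1
    · exact e_mem_L.2.2.2
  | zero => exact Lideal.zero_mem
  | add y z _ _ ihy ihz => exact add_mem ihy ihz
  | smul n y _ ihy =>
    have h : n • y = (⟨((n:ℤ):ℂ), intCast_mem _ _⟩ : OA) • y := by
      have : ((⟨((n:ℤ):ℂ), intCast_mem _ _⟩ : OA) : OA) • y = ((n:ℤ):ℂ) * y := rfl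
      rw [this, zsmul_eq_mul]
    rw [h]; exact Submodule.smul_mem _ _ ihy

lemma rep_conj (a b c d : ℚ) : (starRingEnd ℂ) (rep a b c d) = rep a (-b) (-c) d := by
  unfold rep
  simp [map_add, map_mul, Complex.conj_I, Complex.conj_ofReal, map_ratCast]
lemma rep_re (a b c d : ℚ) : (rep a b c d).re = (a:ℝ) + (d:ℝ) * Real.sqrt 15 := by
  unfold rep
  simp [Complex.add_re, Complex.mul_re, Complex.mul_im, Complex.I_re, Complex.I_im,
    Complex.ofReal_re, Complex.ofReal_im, Complex.ratCast_re, Complex.ratCast_im]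

lemma pair_re (a b c d a' b' c' d' : ℚ) :
    ((starRingEnd ℂ) (rep a b c d) * rep a' b' c' d').re
      = ((a*a'+3*b*b'+5*c*c'+15*d*d' : ℚ) : ℝ)
        + ((a*d'+a'*d+b*c'+b'*c : ℚ) : ℝ) * Real.sqrt 15 := by
  rw [rep_conj, rep_mul', rep_re]; push_cast; ring

/-- The statement appearing in `dualSet`. -/
def QQ (τ : Fq15 ≃ₐ[ℚ] Fq15) (x y : ℂ) : Prop :=
  ∃ z : Fq15, (z : ℝ) = ((starRingEnd ℂ) x * y).re ∧ ∃ n : ℤ, (z : ℝ) + (τ z : ℝ) = (n : ℝ)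

lemma pair_exists (τ : Fq15 ≃ₐ[ℚ] Fq15)
    (hτ : ∀ z : Fq15, (z : ℝ) = Real.sqrt 15 → (τ z : ℝ) = -Real.sqrt 15)
    (a b c d a' b' c' d' : ℚ) (n : ℤ)
    (hn : 2*(a*a'+3*b*b'+5*c*c'+15*d*d') = (n:ℚ)) :
    QQ τ (rep a b c d) (rep a' b' c' d') := by
  refine ⟨zF (a*a'+3*b*b'+5*c*c'+15*d*d') (a*d'+a'*d+b*c'+b'*c), ?_, n, ?_⟩
  · rw [zF_coe, pair_re]
  · rw [zF_tau τ hτ, zF_coe, zF_coe]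
    have hn' := congrArg (fun q : ℚ => (q:ℝ)) hn
    push_cast at hn' ⊢
    linear_combination hn'

lemma pair_value (τ : Fq15 ≃ₐ[ℚ] Fq15)
    (hτ : ∀ z : Fq15, (z : ℝ) = Real.sqrt 15 → (τ z : ℝ) = -Real.sqrt 15)
    (a b c d a' b' c' d' : ℚ) (z : Fq15)
    (hz : (z : ℝ) = ((starRingEnd ℂ) (rep a b c d) * rep a' b' c' d').re)
    (n : ℤ) (hn : (z : ℝ) + (τ z : ℝ) = (n : ℝ)) :
    2*(a*a'+3*b*b'+5*c*c'+15*d*d') = (n:ℚ) := by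
  have hzz : z = zF (a*a'+3*b*b'+5*c*c'+15*d*d') (a*d'+a'*d+b*c'+b'*c) :=
    Subtype.coe_injective (by
      show (z:ℝ) = ((zF _ _ : Fq15) : ℝ)
      rw [hz, pair_re, zF_coe])
  subst hzz
  rw [zF_tau τ hτ, zF_coe, zF_coe] at hn
  have : ((2*(a*a'+3*b*b'+5*c*c'+15*d*d') : ℚ) : ℝ) = ((n:ℚ):ℝ) := by
    push_cast at hn ⊢; linarith
  exact_mod_cast this

lemma QQ_zero_left (τ : Fq15 ≃ₐ[ℚ] Fq15) (y : ℂ) : QQ τ 0 y :=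
  ⟨0, by simp, 0, by simp⟩
lemma QQ_zero_right (τ : Fq15 ≃ₐ[ℚ] Fq15) (x : ℂ) : QQ τ x 0 :=
  ⟨0, by simp, 0, by simp⟩
lemma QQ_add_left (τ : Fq15 ≃ₐ[ℚ] Fq15) {x1 x2 y : ℂ} (h1 : QQ τ x1 y) (h2 : QQ τ x2 y) :
    QQ τ (x1 + x2) y := by
  obtain ⟨z1, hz1, n1, hn1⟩ := h1
  obtain ⟨z2, hz2, n2, hn2⟩ := h2
  refine ⟨z1 + z2, ?_, n1 + n2, ?_⟩
  · push_cast; rw [hz1, hz2, map_add, add_mul, Complex.add_re]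
  · push_cast [map_add]; push_cast at hn1 hn2; linarith
lemma QQ_add_right (τ : Fq15 ≃ₐ[ℚ] Fq15) {x y1 y2 : ℂ} (h1 : QQ τ x y1) (h2 : QQ τ x y2) :
    QQ τ x (y1 + y2) := by
  obtain ⟨z1, hz1, n1, hn1⟩ := h1
  obtain ⟨z2, hz2, n2, hn2⟩ := h2
  refine ⟨z1 + z2, ?_, n1 + n2, ?_⟩
  · push_cast; rw [hz1, hz2, mul_add, Complex.add_re]
  · push_cast [map_add]; push_cast at hn1 hn2; linarith
lemma QQ_smul_left (τ : Fq15 ≃ₐ[ℚ] Fq15) (n : ℤ) {x y : ℂ} (h : QQ τ x y) :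
    QQ τ (n • x) y := by
  obtain ⟨z, hz, m, hm⟩ := h
  refine ⟨((n:ℤ):Fq15) * z, ?_, n * m, ?_⟩
  · push_cast [zsmul_eq_mul]
    rw [hz, map_mul, map_intCast, mul_assoc, Complex.mul_re]
    simp
  · rw [map_mul, map_intCast]
    push_cast
    linear_combination (n:ℝ) * hm
lemma QQ_smul_right (τ : Fq15 ≃ₐ[ℚ] Fq15) (n : ℤ) {x y : ℂ} (h : QQ τ x y) :
    QQ τ x (n • y) := by
  obtain ⟨z, hz, m, hm⟩ := h
  refine ⟨((n:ℤ):Fq15) * z, ?_, n * m, ?_⟩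
  · push_cast [zsmul_eq_mul]
    rw [hz, mul_left_comm, Complex.mul_re]
    simp
  · rw [map_mul, map_intCast]
    push_cast
    linear_combination (n:ℝ) * hm

lemma cc_rep : Complex.I * (Real.sqrt 5:ℂ) / 135 = rep 0 0 (1/135) 0 := by
  unfold rep; push_cast; ring
lemma e1'_eq : e1' = rep (3/2) (3/2) 3 0 := rfl
lemma e2'_eq : e2' = rep 0 3 0 0 := rfl
lemma e3'_eq : e3' = rep 0 0 (9/2) (3/2) := rfl
lemma e4'_eq : e4' = rep 0 0 0 3 := rfl

lemma cf1 : Complex.I * (Real.sqrt 5:ℂ) / 135 * e1' = rep (-1/9) 0 (1/90) (-1/90) := by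
  rw [cc_rep, e1'_eq, rep_mul']
  exact rep_congr (by norm_num) (by norm_num) (by norm_num) (by norm_num)
lemma cf2 : Complex.I * (Real.sqrt 5:ℂ) / 135 * e2' = rep 0 0 0 (-1/45) := by
  rw [cc_rep, e2'_eq, rep_mul']
  exact rep_congr (by norm_num) (by norm_num) (by norm_num) (by norm_num)
lemma cf3 : Complex.I * (Real.sqrt 5:ℂ) / 135 * e3' = rep (-1/6) (1/18) 0 0 := by
  rw [cc_rep, e3'_eq, rep_mul']
  exact rep_congr (by norm_num) (by norm_num) (by norm_num) (by norm_num)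
lemma cf4 : Complex.I * (Real.sqrt 5:ℂ) / 135 * e4' = rep 0 (1/9) 0 0 := by
  rw [cc_rep, e4'_eq, rep_mul']
  exact rep_congr (by norm_num) (by norm_num) (by norm_num) (by norm_num)

lemma Q_inner (τ : Fq15 ≃ₐ[ℚ] Fq15) (x' : ℂ)
    (h1 : QQ τ x' (Complex.I * (Real.sqrt 5:ℂ) / 135 * e1'))
    (h2 : QQ τ x' (Complex.I * (Real.sqrt 5:ℂ) / 135 * e2'))
    (h3 : QQ τ x' (Complex.I * (Real.sqrt 5:ℂ) / 135 * e3'))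
    (h4 : QQ τ x' (Complex.I * (Real.sqrt 5:ℂ) / 135 * e4')) :
    ∀ x ∈ Espan, QQ τ x' (Complex.I * (Real.sqrt 5:ℂ) / 135 * x) := by
  intro x hx
  induction hx using Submodule.span_induction with
  | mem y hy => rcases hy with rfl | rfl | rfl | rfl <;> assumption
  | zero => rw [mul_zero]; exact QQ_zero_right τ x'
  | add y z _ _ ihy ihz => rw [mul_add]; exact QQ_add_right τ ihy ihz
  | smul n y _ ihy => rw [mul_smul_comm]; exact QQ_smul_right τ n ihy

lemma Q_all (τ : Fq15 ≃ₐ[ℚ] Fq15)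
    (hτ : ∀ z : Fq15, (z : ℝ) = Real.sqrt 15 → (τ z : ℝ) = -Real.sqrt 15) :
    ∀ x' ∈ Espan, ∀ x ∈ Espan, QQ τ x' (Complex.I * (Real.sqrt 5:ℂ) / 135 * x) := by
  intro x' hx'
  induction hx' using Submodule.span_induction with
  | mem y hy =>
    rcases hy with rfl | rfl | rfl | rfl
    · refine Q_inner τ _ ?_ ?_ ?_ ?_
      · rw [cf1]; exact pair_exists τ hτ (3/2) (3/2) 3 0 (-1/9) 0 (1/90) (-1/90) 0 (by norm_num)
      · rw [cf2]; exact pair_exists τ hτ (3/2) (3/2) 3 0 0 0 0 (-1/45) 0 (by norm_num)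
      · rw [cf3]; exact pair_exists τ hτ (3/2) (3/2) 3 0 (-1/6) (1/18) 0 0 0 (by norm_num)
      · rw [cf4]; exact pair_exists τ hτ (3/2) (3/2) 3 0 0 (1/9) 0 0 1 (by norm_num)
    · refine Q_inner τ _ ?_ ?_ ?_ ?_
      · rw [cf1]; exact pair_exists τ hτ 0 3 0 0 (-1/9) 0 (1/90) (-1/90) 0 (by norm_num)
      · rw [cf2]; exact pair_exists τ hτ 0 3 0 0 0 0 0 (-1/45) 0 (by norm_num)
      · rw [cf3]; exact pair_exists τ hτ 0 3 0 0 (-1/6) (1/18) 0 0 1 (by norm_num)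
      · rw [cf4]; exact pair_exists τ hτ 0 3 0 0 0 (1/9) 0 0 2 (by norm_num)
    · refine Q_inner τ _ ?_ ?_ ?_ ?_
      · rw [cf1]; exact pair_exists τ hτ 0 0 (9/2) (3/2) (-1/9) 0 (1/90) (-1/90) 0 (by norm_num)
      · rw [cf2]; exact pair_exists τ hτ 0 0 (9/2) (3/2) 0 0 0 (-1/45) (-1) (by norm_num)
      · rw [cf3]; exact pair_exists τ hτ 0 0 (9/2) (3/2) (-1/6) (1/18) 0 0 0 (by norm_num)
      · rw [cf4]; exact pair_exists τ hτ 0 0 (9/2) (3/2) 0 (1/9) 0 0 0 (by norm_num)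
    · refine Q_inner τ _ ?_ ?_ ?_ ?_
      · rw [cf1]; exact pair_exists τ hτ 0 0 0 3 (-1/9) 0 (1/90) (-1/90) (-1) (by norm_num)
      · rw [cf2]; exact pair_exists τ hτ 0 0 0 3 0 0 0 (-1/45) (-2) (by norm_num)
      · rw [cf3]; exact pair_exists τ hτ 0 0 0 3 (-1/6) (1/18) 0 0 0 (by norm_num)
      · rw [cf4]; exact pair_exists τ hτ 0 0 0 3 0 (1/9) 0 0 0 (by norm_num)
  | zero => intro x hx; exact QQ_zero_left τ _
  | add y z _ _ ihy ihz =>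
    intro x hx; exact QQ_add_left τ (ihy x hx) (ihz x hx)
  | smul n y _ ihy =>
    intro x hx; exact QQ_smul_left τ n (ihy x hx)

lemma espan_rep : ∀ x ∈ Espan, ∃ a b c d : ℚ, x = rep a b c d := by
  intro x hx
  induction hx using Submodule.span_induction with
  | mem y hy =>
    rcases hy with rfl | rfl | rfl | rfl
    exacts [⟨_,_,_,_, e1'_eq⟩, ⟨_,_,_,_, e2'_eq⟩, ⟨_,_,_,_, e3'_eq⟩, ⟨_,_,_,_, e4'_eq⟩]
  | zero => exact ⟨0,0,0,0, by unfold rep; norm_num⟩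
  | add y z _ _ ihy ihz =>
    obtain ⟨a,b,c,d,rfl⟩ := ihy; obtain ⟨a',b',c',d',rfl⟩ := ihz
    exact ⟨_,_,_,_, rep_add' _ _ _ _ _ _ _ _⟩
  | smul n y _ ihy =>
    obtain ⟨a,b,c,d,rfl⟩ := ihy
    exact ⟨_,_,_,_, rep_zsmul n a b c d⟩

/-- The dual module of the return module ideal L = (g₁, g₃) equals (i√5/135)·L. -/
theorem dual_of_L (τ : Fq15 ≃ₐ[ℚ] Fq15)
    (hτ : ∀ z : Fq15, (z : ℝ) = Real.sqrt 15 → (τ z : ℝ) = -Real.sqrt 15) :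
    dualSet τ (Lideal : Set ℂ) =
      (fun w : ℂ => Complex.I * (Real.sqrt 5 : ℂ) / 135 * w) '' (Lideal : Set ℂ) := by
  ext y
  simp only [dualSet, Set.mem_setOf_eq, Set.mem_image]
  constructor
  · rintro ⟨hyK, hcond⟩
    obtain ⟨a, b, c, d, rfl⟩ := rep_of_K hyK
    obtain ⟨z1, hz1, n1, hn1⟩ := hcond e1' e_mem_L.1
    obtain ⟨z2, hz2, n2, hn2⟩ := hcond e2' e_mem_L.2.1
    obtain ⟨z3, hz3, n3, hn3⟩ := hcond e3' e_mem_L.2.2.1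
    obtain ⟨z4, hz4, n4, hn4⟩ := hcond e4' e_mem_L.2.2.2
    have N1 := pair_value τ hτ (3/2) (3/2) 3 0 a b c d z1 hz1 n1 hn1
    have N2 := pair_value τ hτ 0 3 0 0 a b c d z2 hz2 n2 hn2
    have N3 := pair_value τ hτ 0 0 (9/2) (3/2) a b c d z3 hz3 n3 hn3
    have N4 := pair_value τ hτ 0 0 0 3 a b c d z4 hz4 n4 hn4
    refine ⟨((2*n3 - n4 : ℤ):ℂ) * e1' + ((-n3 : ℤ):ℂ) * e2'
      + ((-2*n1 + n2 : ℤ):ℂ) * e3' + ((n1 : ℤ):ℂ) * e4', E_subset_L (combo_mem _ _ _ _), ?_⟩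
    simp only [e1'_eq, e2'_eq, e3'_eq, e4'_eq, rep_intCast, cc_rep, rep_mul', rep_add']
    refine rep_congr ?_ ?_ ?_ ?_
    · push_cast
      linear_combination (-1/3 : ℚ) * N1 + (1/6 : ℚ) * N2 + (2/9 : ℚ) * N3 + (-1/9 : ℚ) * N4
    · push_cast
      linear_combination (-1/18 : ℚ) * N2
    · push_cast
      linear_combination (-1/45 : ℚ) * N3 + (1/90 : ℚ) * N4
    · push_cast
      linear_combination (-1/90 : ℚ) * N4
  · rintro ⟨x, hxL, rfl⟩
    have hxE : x ∈ Espan := L_subset_E hxL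
    constructor
    · obtain ⟨a, b, c, d, rfl⟩ := espan_rep x hxE
      have h : Complex.I * (Real.sqrt 5:ℂ) / 135 * rep a b c d
          = rep 0 0 (1/135) 0 * rep a b c d := by rw [cc_rep]
      rw [h, rep_mul']
      exact rep_mem_K _ _ _ _
    · intro x' hx'
      exact Q_all τ hτ x' (L_subset_E hx') x hxE
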